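/- arXiv:2211.03867 — 2 statements merged into one kernel-verified Lean document; each statement's English description precedes it below -/
import Mathlib

section
/- The map φₜ(v,z) = (e^{tA}v, ⟨e^{t·trA} Λₜ^{(A−trA·I₂)}(η), v⟩ + z e^{t·trA}) is, for each t ∈ ℝ, an automorphism of the Heisenberg group H, and t ↦ φₜ is a one-parameter group: φₜ ∘ φ_s = φ_{t+s}. -/
/-!
Each `φₜ` has the shape `(v, z) ↦ (M v, ⟨a, v⟩ + r z)`. Such a map is a homomorphism of the
Heisenberg product as soon as `det M = r`, because the form `⟨u, θ w⟩` scales by `det M`;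
for `M = e^{tA}` Liouville's formula `det e^{tA} = e^{t tr A}` gives exactly `r = e^{t tr A}`.
Composition of such maps multiplies the linear parts and twists the translation parts, so the
group law reduces to a cocycle identity for `a(t) = e^{t tr A} Λₜ`. It comes from splitting the
integral defining `Λ_{t+s}` at `s`, shifting, and `e^{s(A - tr A·I)} = e^{-s tr A} e^{sA}`.
Bijectivity then follows from `φ₋ₜ ∘ φₜ = φ₀ = id`.
-/

open Matrix

/-- The Heisenberg group as ℝ² × ℝ (with ℝ² = Fin 2 → ℝ). -/
abbrev H2 : Type := (Fin 2 → ℝ) × ℝ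

/-- Counterclockwise rotation by π/2. -/
noncomputable def theta (v : Fin 2 → ℝ) : Fin 2 → ℝ := ![-(v 1), v 0]

/-- The Heisenberg product. -/
noncomputable def hmul (g h : H2) : H2 :=
  (g.1 + h.1, g.2 + h.2 + (1 / 2) * (g.1 ⬝ᵥ theta h.1))

/-- The operator Λₜ^B(η) = ∫₀ᵗ e^{sBᵀ} η ds, componentwise. -/
noncomputable def Lam (B : Matrix (Fin 2) (Fin 2) ℝ) (η : Fin 2 → ℝ) (t : ℝ) :
    Fin 2 → ℝ :=
  fun i => ∫ s in (0 : ℝ)..t, (NormedSpace.exp (s • Bᵀ) *ᵥ η) i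

/-- The flow φₜ(v,z) = (e^{tA}v, ⟨e^{t·trA}Λₜ^{(A−trA·I₂)}η, v⟩ + z·e^{t·trA}). -/
noncomputable def flow (A : Matrix (Fin 2) (Fin 2) ℝ) (η : Fin 2 → ℝ) (t : ℝ)
    (g : H2) : H2 :=
  (NormedSpace.exp (t • A) *ᵥ g.1,
    (Real.exp (t * A.trace) • Lam (A - A.trace • 1) η t) ⬝ᵥ g.1 +
      g.2 * Real.exp (t * A.trace))

open NormedSpace

noncomputable def heisMap (M : Matrix (Fin 2) (Fin 2) ℝ) (a : Fin 2 → ℝ) (r : ℝ) (g : H2) :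
    H2 :=
  (M *ᵥ g.1, a ⬝ᵥ g.1 + g.2 * r)

theorem heisMap_comp (M N : Matrix (Fin 2) (Fin 2) ℝ) (a b : Fin 2 → ℝ) (r q : ℝ) :
    heisMap M a r ∘ heisMap N b q = heisMap (M * N) (a ᵥ* N + r • b) (r * q) := by
  funext ⟨v, z⟩
  simp only [heisMap, Function.comp, mulVec_mulVec, dotProduct_mulVec, add_dotProduct,
    smul_dotProduct, smul_eq_mul, Prod.mk.injEq, true_and]
  ring

theorem dotProduct_theta_mulVec (M : Matrix (Fin 2) (Fin 2) ℝ) (u w : Fin 2 → ℝ) :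
    (M *ᵥ u) ⬝ᵥ theta (M *ᵥ w) = M.det * (u ⬝ᵥ theta w) := by
  simp only [theta, dotProduct, mulVec, det_fin_two, Fin.sum_univ_two, Matrix.cons_val_zero,
    Matrix.cons_val_one]
  ring

theorem heisMap_hmul {M : Matrix (Fin 2) (Fin 2) ℝ} {a : Fin 2 → ℝ} {r : ℝ} (hM : M.det = r)
    (g h : H2) : heisMap M a r (hmul g h) = hmul (heisMap M a r g) (heisMap M a r h) := by
  simp only [heisMap, hmul, mulVec_add, dotProduct_add, dotProduct_theta_mulVec, hM,
    Prod.mk.injEq, true_and]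
  ring

theorem eq_exp_mul_of_hasDerivAt {f : ℝ → ℝ} {c : ℝ} (hf : ∀ t, HasDerivAt f (c * f t) t)
    (t : ℝ) : f t = Real.exp (t * c) * f 0 := by
  have hg : ∀ t, HasDerivAt (fun t => Real.exp (-(t * c)) * f t) 0 t := fun t => by
    refine (((hasDerivAt_mul_const c).fun_neg.exp).fun_mul (hf t)).congr_deriv ?_
    ring
  have hconst := is_const_of_deriv_eq_zero (fun t => (hg t).differentiableAt)
    (fun t => (hg t).deriv) t 0
  rw [zero_mul, neg_zero, Real.exp_zero, one_mul] at hconst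
  rw [← hconst, ← mul_assoc, ← Real.exp_add, add_neg_cancel, Real.exp_zero, one_mul]

section

variable {m : Type*} [Fintype m] [DecidableEq m]

theorem Matrix.exp_add_smul (A : Matrix m m ℝ) (t s : ℝ) :
    exp ((t + s) • A) = exp (t • A) * exp (s • A) := by
  rw [add_smul]
  exact exp_add_of_commute _ _ (((Commute.refl A).smul_left t).smul_right s)

attribute [local instance] Matrix.linftyOpNormedRing Matrix.linftyOpNormedAlgebra

theorem Matrix.continuous_exp_smul (A : Matrix m m ℝ) : Continuous fun t : ℝ => exp (t • A) :=
  continuous_iff_continuousAt.2 fun t => (hasDerivAt_exp_smul_const' A t).continuousAt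

theorem Matrix.hasDerivAt_exp_smul_apply (A : Matrix m m ℝ) (i j : m) (t : ℝ) :
    HasDerivAt (fun t : ℝ => exp (t • A) i j) ((A * exp (t • A)) i j) t :=
  (entryLinearMap ℝ ℝ i j).toContinuousLinearMap.hasFDerivAt.comp_hasDerivAt t
    (hasDerivAt_exp_smul_const' A t)

theorem Matrix.exp_smul_sub_smul_one (B : Matrix m m ℝ) (c s : ℝ) :
    exp (s • (B - c • 1)) = Real.exp (-(s * c)) • exp (s • B) := by
  have hsplit : s • (B - c • 1) = s • B + algebraMap ℝ (Matrix m m ℝ) (-(s * c)) := by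
    rw [Algebra.algebraMap_eq_smul_one, smul_sub, smul_smul, neg_smul, sub_eq_add_neg]
  have hscalar : exp (algebraMap ℝ (Matrix m m ℝ) (-(s * c))) = Real.exp (-(s * c)) • 1 := by
    rw [Real.exp_eq_exp_ℝ, ← Algebra.algebraMap_eq_smul_one]
    exact (algebraMap_exp_comm _).symm
  rw [hsplit, exp_add_of_commute _ _ (Algebra.commute_algebraMap_right _ _), hscalar,
    Algebra.mul_smul_comm, mul_one]

end

theorem det_exp_smul (A : Matrix (Fin 2) (Fin 2) ℝ) (t : ℝ) :
    (exp (t • A)).det = Real.exp (t * A.trace) := by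
  have hderiv : ∀ t, HasDerivAt (fun t : ℝ => (exp (t • A)).det)
      (A.trace * (exp (t • A)).det) t := fun t => by
    simp only [det_fin_two]
    refine (((A.hasDerivAt_exp_smul_apply 0 0 t).fun_mul
      (A.hasDerivAt_exp_smul_apply 1 1 t)).fun_sub
      ((A.hasDerivAt_exp_smul_apply 0 1 t).fun_mul
        (A.hasDerivAt_exp_smul_apply 1 0 t))).congr_deriv ?_
    simp only [mul_apply, Fin.sum_univ_two, trace_fin_two]
    ring
  rw [eq_exp_mul_of_hasDerivAt hderiv t, zero_smul, exp_zero, det_one, mul_one]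

theorem Lam_eq_intervalIntegral (B : Matrix (Fin 2) (Fin 2) ℝ) (η : Fin 2 → ℝ) (t : ℝ) :
    Lam B η t = ∫ s in (0 : ℝ)..t, exp (s • Bᵀ) *ᵥ η := by
  have hf : Continuous fun s : ℝ => exp (s • Bᵀ) *ᵥ η :=
    Bᵀ.continuous_exp_smul.matrix_mulVec continuous_const
  funext i
  exact ContinuousLinearMap.intervalIntegral_comp_comm
    (ContinuousLinearMap.proj (R := ℝ) (φ := fun _ : Fin 2 => ℝ) i) (hf.intervalIntegrable 0 t)

theorem Lam_add (B : Matrix (Fin 2) (Fin 2) ℝ) (η : Fin 2 → ℝ) (t s : ℝ) :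
    Lam B η (t + s) = Lam B η s + Lam B η t ᵥ* exp (s • B) := by
  set f : ℝ → Fin 2 → ℝ := fun u => exp (u • Bᵀ) *ᵥ η
  have hf : Continuous f := Bᵀ.continuous_exp_smul.matrix_mulVec continuous_const
  have hshift : ∀ u, f (u + s) = exp (s • Bᵀ) *ᵥ f u := fun u => by
    simp only [f, add_comm u s, Matrix.exp_add_smul, mulVec_mulVec]
  have htail : ∫ u in s..t + s, f u = exp (s • Bᵀ) *ᵥ ∫ u in (0 : ℝ)..t, f u :=
    calc ∫ u in s..t + s, f u = ∫ u in (0 : ℝ)..t, f (u + s) := by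
          rw [intervalIntegral.integral_comp_add_right, zero_add]
      _ = ∫ u in (0 : ℝ)..t, exp (s • Bᵀ) *ᵥ f u := by simp only [hshift]
      _ = exp (s • Bᵀ) *ᵥ ∫ u in (0 : ℝ)..t, f u :=
          (mulVecLin (exp (s • Bᵀ))).toContinuousLinearMap.intervalIntegral_comp_comm
            (hf.intervalIntegrable 0 t)
  rw [Lam_eq_intervalIntegral, Lam_eq_intervalIntegral, Lam_eq_intervalIntegral,
    ← intervalIntegral.integral_add_adjacent_intervals (hf.intervalIntegrable 0 s)
      (hf.intervalIntegrable s (t + s)), htail, ← transpose_smul, exp_transpose, mulVec_transpose]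

noncomputable def flowCocycle (A : Matrix (Fin 2) (Fin 2) ℝ) (η : Fin 2 → ℝ) (t : ℝ) :
    Fin 2 → ℝ :=
  Real.exp (t * A.trace) • Lam (A - A.trace • 1) η t

theorem flowCocycle_add (A : Matrix (Fin 2) (Fin 2) ℝ) (η : Fin 2 → ℝ) (t s : ℝ) :
    flowCocycle A η (t + s) =
      flowCocycle A η t ᵥ* exp (s • A) + Real.exp (t * A.trace) • flowCocycle A η s := by
  simp only [flowCocycle, Lam_add, Matrix.exp_smul_sub_smul_one, vecMul_smul, smul_vecMul,
    smul_add, smul_smul, ← Real.exp_add]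
  rw [add_comm]
  ring_nf

theorem flow_eq_heisMap (A : Matrix (Fin 2) (Fin 2) ℝ) (η : Fin 2 → ℝ) (t : ℝ) :
    flow A η t = heisMap (exp (t • A)) (flowCocycle A η t) (Real.exp (t * A.trace)) :=
  rfl

theorem flow_add (A : Matrix (Fin 2) (Fin 2) ℝ) (η : Fin 2 → ℝ) (t s : ℝ) :
    flow A η t ∘ flow A η s = flow A η (t + s) := by
  rw [flow_eq_heisMap, flow_eq_heisMap, flow_eq_heisMap, heisMap_comp, Matrix.exp_add_smul,
    flowCocycle_add, ← Real.exp_add, add_mul]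

theorem flow_zero (A : Matrix (Fin 2) (Fin 2) ℝ) (η : Fin 2 → ℝ) : flow A η 0 = id := by
  funext g
  simp [flow, Lam]

/-- Each φₜ is an automorphism of the Heisenberg group and t ↦ φₜ is a
one-parameter group: φₜ ∘ φₛ = φ_{t+s}. -/
theorem flow_is_one_parameter_group_of_automorphisms
    (A : Matrix (Fin 2) (Fin 2) ℝ) (η : Fin 2 → ℝ) :
    (∀ t : ℝ, Function.Bijective (flow A η t) ∧
      ∀ g h : H2, flow A η t (hmul g h) = hmul (flow A η t g) (flow A η t h)) ∧
    (∀ t s : ℝ, flow A η t ∘ flow A η s = flow A η (t + s)) := by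
  refine ⟨fun t => ⟨?_, fun g h => ?_⟩, flow_add A η⟩
  · refine Function.bijective_iff_has_inverse.2 ⟨flow A η (-t), fun g => ?_, fun g => ?_⟩
    · simpa [flow_zero] using congrFun (flow_add A η (-t) t) g
    · simpa [flow_zero] using congrFun (flow_add A η t (-t)) g
  · rw [flow_eq_heisMap]
    exact heisMap_hmul (det_exp_smul A t) g h
end

section
/- The subgroup ℤ² × (1/p)ℤ (p ∈ ℕ, p ≥ 1) of the Heisenberg group is invariant under the flow φₜ(v,z) = (e^{tA}v, ⟨e^{t·trA}Λₜ^{(A−trA·I₂)}(η), v⟩ + z e^{t·trA}) for all t ∈ ℝ if and only if A = 0 and η = 0. -/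
open Matrix

/-! The flow maps each point `(eⱼ, 0)` of the lattice into the lattice, so every entry of
`t ↦ exp (t • A)` is a continuous function with values in the countable set `ℤ`, hence constant;
thus `exp (t • A) = 1` for all `t`, and differentiating at `t = 0` gives `A = 0`. The flow is then
`(v, z) ↦ (v, z + t ⟪η, v⟫)`, and `t ↦ t * η j` is continuous with values in the countable set
`(1/p)ℤ`, which forces `η = 0`. -/

open Set

theorem Continuous.apply_eq_of_countable_range {X Y : Type*} [TopologicalSpace X]
    [PreconnectedSpace X] [MetricSpace Y] {f : X → Y} (hf : Continuous f)
    (hc : (range f).Countable) (x y : X) : f x = f y :=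
  hc.isTotallyDisconnected _ subset_rfl (isPreconnected_range hf) (mem_range_self x)
    (mem_range_self y)

theorem NormedSpace.eq_zero_of_forall_exp_smul_eq_one {𝕂 𝔸 : Type*} [RCLike 𝕂]
    [NormedRing 𝔸] [NormedAlgebra 𝕂 𝔸] [CompleteSpace 𝔸] {x : 𝔸}
    (h : ∀ t : 𝕂, NormedSpace.exp (t • x) = 1) : x = 0 := by
  have hderiv := hasDerivAt_exp_smul_const (𝕂 := 𝕂) x 0
  rw [funext h, zero_smul, NormedSpace.exp_zero, one_mul] at hderiv
  exact hderiv.unique (hasDerivAt_const 0 1)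

section

attribute [local instance] Matrix.linftyOpNormedRing Matrix.linftyOpNormedAlgebra

theorem Matrix.eq_zero_of_exp_smul_apply_mem_range_intCast {n : Type*} [Fintype n]
    [DecidableEq n] {A : Matrix n n ℝ}
    (h : ∀ (t : ℝ) i j, NormedSpace.exp (t • A) i j ∈ range ((↑) : ℤ → ℝ)) : A = 0 := by
  refine NormedSpace.eq_zero_of_forall_exp_smul_eq_one (𝕂 := ℝ) fun t =>
    Matrix.ext fun i j => ?_
  have hcont : Continuous fun s : ℝ => NormedSpace.exp (s • A) :=
    continuous_iff_continuousAt.2 fun s =>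
      (hasDerivAt_exp_smul_const A s).continuousAt
  have hentry : NormedSpace.exp (t • A) i j = NormedSpace.exp ((0 : ℝ) • A) i j :=
    ((continuous_apply_apply i j).comp hcont).apply_eq_of_countable_range
      ((countable_range _).mono (range_subset_iff.2 (h · i j))) t 0
  exact hentry.trans (by rw [zero_smul, NormedSpace.exp_zero])

end

theorem Lam_zero (η : Fin 2 → ℝ) (t : ℝ) : Lam 0 η t = t • η := by
  ext i
  simp [Lam]

theorem flow_zero_left (η : Fin 2 → ℝ) (t : ℝ) (g : H2) :
    flow 0 η t g = (g.1, t * (η ⬝ᵥ g.1) + g.2) := by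
  simp [flow, Lam_zero, smul_dotProduct]

theorem flow_zero_zero (t : ℝ) : flow 0 0 t = id :=
  funext fun g => by simp [flow_zero_left]

def lattice (p : ℕ) : Set H2 :=
  {g | (∀ i, g.1 i ∈ range ((↑) : ℤ → ℝ)) ∧ g.2 ∈ range fun k : ℤ => (k : ℝ) / p}

theorem single_mem_lattice (p : ℕ) (j : Fin 2) :
    ((Pi.single j 1, 0) : H2) ∈ lattice p := by
  refine ⟨fun i => ?_, 0, by simp⟩
  rcases eq_or_ne i j with rfl | hij
  · exact ⟨1, by simp⟩
  · exact ⟨0, by simp [hij]⟩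

theorem lattice_invariant_iff_trivial_general (A : Matrix (Fin 2) (Fin 2) ℝ)
    (η : Fin 2 → ℝ) (p : ℕ)
    (L : Set H2)
    (hL : L = {g : H2 | (∃ m : ℤ, g.1 0 = m) ∧ (∃ m : ℤ, g.1 1 = m) ∧
      ∃ k : ℤ, g.2 = (k : ℝ) / p}) :
    (∀ t : ℝ, flow A η t '' L = L) ↔ (A = 0 ∧ η = 0) := by
  obtain rfl : L = lattice p := by
    rw [hL]
    ext g
    simp [lattice, Fin.forall_fin_two, eq_comm, and_assoc]
  constructor
  · intro h
    have hmaps (t : ℝ) (j : Fin 2) : flow A η t (Pi.single j 1, 0) ∈ lattice p :=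
      h t ▸ mem_image_of_mem _ (single_mem_lattice p j)
    obtain rfl : A = 0 := Matrix.eq_zero_of_exp_smul_apply_mem_range_intCast fun t i j => by
      simpa [flow, mulVec_single] using (hmaps t j).1 i
    refine ⟨rfl, funext fun j => ?_⟩
    have hc : (range fun t : ℝ => t * η j).Countable :=
      (countable_range _).mono <| range_subset_iff.2 fun t => by
        simpa [flow_zero_left] using (hmaps t j).2
    simpa using (continuous_id.mul continuous_const).apply_eq_of_countable_range hc 1 0
  · rintro ⟨rfl, rfl⟩ t
    rw [flow_zero_zero, image_id]

/-- Invariance of the lattice subgroup ℤ² × (1/p)ℤ under the flow forces the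
linear vector field to vanish: A = 0 and η = 0. -/
theorem lattice_invariant_iff_trivial (A : Matrix (Fin 2) (Fin 2) ℝ)
    (η : Fin 2 → ℝ) (p : ℕ) (hp : 1 ≤ p)
    (L : Set H2)
    (hL : L = {g : H2 | (∃ m : ℤ, g.1 0 = m) ∧ (∃ m : ℤ, g.1 1 = m) ∧
      ∃ k : ℤ, g.2 = (k : ℝ) / p}) :
    (∀ t : ℝ, flow A η t '' L = L) ↔ (A = 0 ∧ η = 0) :=
  lattice_invariant_iff_trivial_general A η p L hL
end
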